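/- Consider the formal commutative ring computation: expand the product ∏_{i=1}^{n} (2x_i + 2x_{i+1} + D_{i,i+1}) (indices mod n), where the monomials satisfy the evaluation rules: for each nonempty set I of indices i with a_i ≠ D_{i,i+1} in a product of choices a_1⋯a_n, exactly two consistent choices exist, each contributing 2^{|I|}; and the all-D term D_{12}⋯D_{n-1,n}D_{1n} evaluates to −4. Then the total is ∑_{k=1}^n C(n,k)·2·2^k − 4 = 2·3^n − 6. -/
import Mathlib

/-- The combinatorial core of the intersection computation
`S_{12}·S_{23}·⋯·S_{1n} = 2·3^n − 6`: summing the contribution `2·2^{|I|}` of the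
two surviving choice sequences for each nonempty subset `I ⊆ {1,…,n}`, plus the
contribution `−4` of the all-diagonal term, gives `2·3^n − 6`. -/
theorem scorza_product_expansion (n : ℕ) (hn : 2 ≤ n) :
    (∑ I ∈ (Finset.range n).powerset.filter (fun I => I.Nonempty),
        (2 * 2 ^ I.card : ℤ)) - 4 = 2 * 3 ^ n - 6 := by
  have key : (∑ I ∈ (Finset.range n).powerset, ((2:ℤ) ^ I.card * 1 ^ (n - I.card)))
      = (2 + 1) ^ n := by
    simpa using Finset.sum_pow_mul_eq_add_pow (2 : ℤ) 1 (Finset.range n)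
  simp only [one_pow, mul_one] at key
  have split : (∑ I ∈ (Finset.range n).powerset, ((2:ℤ) ^ I.card))
      = (∑ I ∈ (Finset.range n).powerset.filter (fun I => I.Nonempty), ((2:ℤ) ^ I.card)) + 1 := by
    rw [← Finset.sum_filter_add_sum_filter_not _ (fun I => I.Nonempty)]
    congr 1
    rw [Finset.sum_eq_single (∅ : Finset ℕ)]
    · simp
    · intro b hb hne
      simp only [Finset.mem_filter, Finset.not_nonempty_iff_eq_empty] at hb
      exact absurd hb.2 hne
    · intro h
      simp at h
  have : (∑ I ∈ (Finset.range n).powerset.filter (fun I => I.Nonempty), ((2:ℤ) ^ I.card))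
      = 3 ^ n - 1 := by rw [split] at key; norm_num at key; linarith
  calc (∑ I ∈ (Finset.range n).powerset.filter (fun I => I.Nonempty),
        (2 * 2 ^ I.card : ℤ)) - 4
      = 2 * (∑ I ∈ (Finset.range n).powerset.filter (fun I => I.Nonempty),
        ((2:ℤ) ^ I.card)) - 4 := by rw [Finset.mul_sum]
    _ = 2 * 3 ^ n - 6 := by rw [this]; ring
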